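/- Let U ⊆ ℝ^{n+2} be open, let w ∈ ℝ, and let k ≥ 1 be an integer with n + 2w ≠ 2k. Suppose f̃ and u are smooth functions on U satisfying Δ̃f̃ = Q^{k−1} u and Xu = (w − 2k) u on U. Set η = −(2k(n + 2w − 2k))^{-1} u. Then Δ̃(f̃ + Q^k η) = Q^k Δ̃η on U; in particular, modifying f̃ by Q^k η improves the order of vanishing along the zero set of Q of the Laplacian from Q^{k−1} to Q^k. -/

import Mathlib

open Matrix

noncomputable section

abbrev Idx (p q : ℕ) : Type := Unit ⊕ (Fin (p + q)) ⊕ Unit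

/-- The diagonal quadratic form of signature `(p,q)` on `ℝ^n`, `n = p + q`. -/
def hMat (p q : ℕ) : Matrix (Fin (p + q)) (Fin (p + q)) ℝ :=
  Matrix.diagonal fun i => if (i : ℕ) < p then (1 : ℝ) else -1

/-- The quadratic form of signature `(p+1,q+1)` on `ℝ^{n+2}`, in block form
`[[0,0,1],[0,h,0],[1,0,0]]`. -/
def htMat (p q : ℕ) : Matrix (Idx p q) (Idx p q) ℝ :=
  Matrix.of fun I J =>
    match I, J with
    | Sum.inl _, Sum.inr (Sum.inr _) => (1 : ℝ)
    | Sum.inr (Sum.inr _), Sum.inl _ => 1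
    | Sum.inr (Sum.inl i), Sum.inr (Sum.inl j) => hMat p q i j
    | _, _ => 0

/-- `Q(x) = Σ h̃_{IJ} x^I x^J`. -/
def QForm (p q : ℕ) (x : Idx p q → ℝ) : ℝ := ∑ I, ∑ J, htMat p q I J * x I * x J

/-- The partial derivative `∂_I f`. -/
def pderiv (p q : ℕ) (I : Idx p q) (f : (Idx p q → ℝ) → ℝ) : (Idx p q → ℝ) → ℝ :=
  fun x => fderiv ℝ f x (Pi.single I 1)

/-- The ambient Laplacian `Δ̃f = Σ h̃^{IJ} ∂_I ∂_J f`. -/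
def laplt (p q : ℕ) (f : (Idx p q → ℝ) → ℝ) : (Idx p q → ℝ) → ℝ :=
  fun x => ∑ I, ∑ J, (htMat p q)⁻¹ I J * pderiv p q I (pderiv p q J f) x

/-- The Euler operator `Xf = Σ x^I ∂_I f`. -/
def euler (p q : ℕ) (f : (Idx p q → ℝ) → ℝ) : (Idx p q → ℝ) → ℝ :=
  fun x => ∑ I, x I * pderiv p q I f x

/-- The null cone `N = {x ≠ 0 : Q(x) = 0}` of `h̃`. -/
def nullCone (p q : ℕ) : Set (Idx p q → ℝ) := {x | x ≠ 0 ∧ QForm p q x = 0}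

/-- A function vanishes to infinite order at `y` if its value and all iterated
derivatives of every order vanish at `y`. -/
def VanishesToInfOrderAt (p q : ℕ) (f : (Idx p q → ℝ) → ℝ) (y : Idx p q → ℝ) : Prop :=
  ∀ k : ℕ, iteratedFDeriv ℝ k f y = 0

/-- An open cone in `ℝ^{n+2} ∖ {0}`. -/
def IsOpenCone (p q : ℕ) (U : Set (Idx p q → ℝ)) : Prop :=
  IsOpen U ∧ (∀ x ∈ U, x ≠ 0) ∧ ∀ x ∈ U, ∀ l : ℝ, 0 < l → l • x ∈ U

/-- The constant `c_m` with `c_m⁻¹ = (-4)^{m-1} ((m-1)!)²`. -/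
def cConst (m : ℕ) : ℝ := ((-4 : ℝ) ^ (m - 1) * ((m - 1).factorial : ℝ) ^ 2)⁻¹

lemma htMat_symm (p q : ℕ) (I J : Idx p q) : htMat p q I J = htMat p q J I := by
  rcases I with _ | i | _ <;> rcases J with _ | j | _ <;>
    simp only [htMat, hMat, Matrix.of_apply, Matrix.diagonal_apply]
  by_cases h : i = j
  · subst h; simp
  · simp [h, Ne.symm h]

lemma hMat_mul_self (p q : ℕ) : hMat p q * hMat p q = 1 := by
  rw [hMat, Matrix.diagonal_mul_diagonal]
  ext i j
  by_cases h : i = j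
  · subst h; simp [Matrix.diagonal_apply, Matrix.one_apply]; split_ifs <;> norm_num
  · simp [Matrix.diagonal_apply, Matrix.one_apply, h]

lemma htMat_mul_self (p q : ℕ) : htMat p q * htMat p q = 1 := by
  ext I J
  rw [Matrix.mul_apply]
  rw [Fintype.sum_sum_type]
  simp only [Fintype.sum_sum_type]
  rcases I with _ | i | _ <;> rcases J with _ | j | _ <;>
    simp [htMat, Matrix.one_apply]
  · have := congrFun (congrFun (hMat_mul_self p q) i) j
    rw [Matrix.mul_apply] at this
    rw [this]
    by_cases h : i = j <;> simp [Matrix.one_apply, h]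

lemma htMat_inv (p q : ℕ) : (htMat p q)⁻¹ = htMat p q :=
  Matrix.inv_eq_right_inv (htMat_mul_self p q)


section Calc
variable {p q : ℕ} {f g : (Idx p q → ℝ) → ℝ} {x : Idx p q → ℝ} {I : Idx p q}

lemma pderiv_fun_add (hf : DifferentiableAt ℝ f x) (hg : DifferentiableAt ℝ g x) :
    pderiv p q I (fun y => f y + g y) x = pderiv p q I f x + pderiv p q I g x := by
  simp [pderiv, fderiv_fun_add hf hg]

lemma pderiv_fun_mul (hf : DifferentiableAt ℝ f x) (hg : DifferentiableAt ℝ g x) :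
    pderiv p q I (fun y => f y * g y) x = f x * pderiv p q I g x + g x * pderiv p q I f x := by
  simp [pderiv, fderiv_fun_mul hf hg]

lemma pderiv_const_mul (hf : DifferentiableAt ℝ f x) (c : ℝ) :
    pderiv p q I (fun y => c * f y) x = c * pderiv p q I f x := by
  simp [pderiv, fderiv_const_mul hf]

lemma pderiv_mul_const (hf : DifferentiableAt ℝ f x) (c : ℝ) :
    pderiv p q I (fun y => f y * c) x = c * pderiv p q I f x := by
  simp [pderiv, fderiv_mul_const hf]

lemma pderiv_fun_pow (hf : DifferentiableAt ℝ f x) (m : ℕ) :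
    pderiv p q I (fun y => f y ^ m) x = (m : ℝ) * f x ^ (m - 1) * pderiv p q I f x := by
  have h1 : HasDerivAt (fun t : ℝ => t ^ m) ((m : ℝ) * f x ^ (m - 1)) (f x) :=
    hasDerivAt_pow m (f x)
  have h2 := h1.comp_hasFDerivAt x hf.hasFDerivAt
  have h3 : HasFDerivAt (fun y => f y ^ m) (((m : ℝ) * f x ^ (m - 1)) • fderiv ℝ f x) x := h2
  rw [pderiv, h3.fderiv]
  simp [pderiv, mul_assoc]

lemma contDiffAt_pderiv (hf : ContDiffAt ℝ (⊤ : ℕ∞) f x) (I : Idx p q) :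
    ContDiffAt ℝ (⊤ : ℕ∞) (pderiv p q I f) x := by
  have h1 : ContDiffAt ℝ (⊤ : ℕ∞) (fderiv ℝ f) x := hf.fderiv_right (by simp)
  exact (ContinuousLinearMap.apply ℝ ℝ (Pi.single I (1:ℝ))).contDiff.contDiffAt.comp x h1

lemma contDiff_coord (I : Idx p q) : ContDiff ℝ (⊤ : ℕ∞) (fun y : Idx p q → ℝ => y I) :=
  (ContinuousLinearMap.proj (R := ℝ) (φ := fun _ : Idx p q => ℝ) I).contDiff

lemma contDiff_QForm (p q : ℕ) : ContDiff ℝ (⊤ : ℕ∞) (QForm p q) := by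
  unfold QForm
  exact ContDiff.sum fun I _ => ContDiff.sum fun J _ =>
    ((contDiff_const.mul (contDiff_coord I)).mul (contDiff_coord J))

lemma hasFDerivAt_QForm (p q : ℕ) (x : Idx p q → ℝ) :
    HasFDerivAt (QForm p q)
      (∑ A : Idx p q, ∑ B : Idx p q,
        ((htMat p q A B * x A) • (ContinuousLinearMap.proj (R := ℝ) (φ := fun _ : Idx p q => ℝ) B) +
          x B • (htMat p q A B • (ContinuousLinearMap.proj (R := ℝ) (φ := fun _ : Idx p q => ℝ) A)))) x := by
  apply HasFDerivAt.fun_sum; intro A _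
  apply HasFDerivAt.fun_sum; intro B _
  exact ((ContinuousLinearMap.proj (R := ℝ) (φ := fun _ : Idx p q => ℝ) A).hasFDerivAt.const_mul
      (htMat p q A B)).mul
    (ContinuousLinearMap.proj (R := ℝ) (φ := fun _ : Idx p q => ℝ) B).hasFDerivAt

lemma pderiv_QForm (p q : ℕ) (I : Idx p q) (x : Idx p q → ℝ) :
    pderiv p q I (QForm p q) x = 2 * ∑ J, htMat p q I J * x J := by
  rw [pderiv, (hasFDerivAt_QForm p q x).fderiv]
  simp only [ContinuousLinearMap.sum_apply, ContinuousLinearMap.add_apply,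
    ContinuousLinearMap.smul_apply, ContinuousLinearMap.proj_apply, Pi.single_apply,
    smul_eq_mul, mul_ite, mul_one, mul_zero, Finset.sum_ite_eq, Finset.sum_ite_eq',
    Finset.mem_univ, if_true, Finset.sum_add_distrib]
  have h2 : ∑ A : Idx p q, ∑ B : Idx p q, (if A = I then x B * htMat p q A B else 0)
      = ∑ B : Idx p q, x B * htMat p q I B := by
    rw [Finset.sum_comm]; simp
  rw [h2, two_mul]
  congr 1
  · exact Finset.sum_congr rfl fun A _ => by rw [htMat_symm p q A I]
  · exact Finset.sum_congr rfl fun B _ => mul_comm _ _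

end Calc

section Contract
variable {p q : ℕ}

lemma pderiv_QForm_eq (p q : ℕ) (I : Idx p q) :
    pderiv p q I (QForm p q) = fun y => 2 * ∑ J, htMat p q I J * y J :=
  funext fun y => pderiv_QForm p q I y

lemma contDiff_pderiv_QForm (p q : ℕ) (I : Idx p q) :
    ContDiff ℝ (⊤ : ℕ∞) (pderiv p q I (QForm p q)) := by
  rw [pderiv_QForm_eq]
  exact contDiff_const.mul (ContDiff.sum fun J _ => contDiff_const.mul (contDiff_coord J))

lemma pderiv_pderiv_QForm (p q : ℕ) (I J : Idx p q) (x : Idx p q → ℝ) :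
    pderiv p q J (pderiv p q I (QForm p q)) x = 2 * htMat p q I J := by
  rw [pderiv_QForm_eq]
  have hd : HasFDerivAt (fun y : Idx p q → ℝ => 2 * ∑ K, htMat p q I K * y K)
      ((2:ℝ) • ∑ K : Idx p q, htMat p q I K •
        (ContinuousLinearMap.proj (R := ℝ) (φ := fun _ : Idx p q => ℝ) K)) x := by
    refine HasFDerivAt.const_mul ?_ 2
    exact HasFDerivAt.fun_sum fun K _ =>
      (ContinuousLinearMap.proj (R := ℝ) (φ := fun _ : Idx p q => ℝ) K).hasFDerivAt.const_mul _
  rw [pderiv, hd.fderiv]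
  simp only [ContinuousLinearMap.smul_apply, ContinuousLinearMap.sum_apply,
    ContinuousLinearMap.proj_apply, Pi.single_apply, smul_eq_mul, mul_ite, mul_one, mul_zero]
  rw [Finset.sum_ite_eq']
  simp

lemma ht_double (p q : ℕ) (x : Idx p q → ℝ) (I : Idx p q) :
    ∑ J, htMat p q I J * (∑ K, htMat p q J K * x K) = x I := by
  calc ∑ J, htMat p q I J * (∑ K, htMat p q J K * x K)
      = ∑ J, ∑ K, htMat p q I J * htMat p q J K * x K := by
        refine Finset.sum_congr rfl fun J _ => ?_
        rw [Finset.mul_sum]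
        exact Finset.sum_congr rfl fun K _ => by ring
    _ = ∑ K, (∑ J, htMat p q I J * htMat p q J K) * x K := by
        rw [Finset.sum_comm]
        refine Finset.sum_congr rfl fun K _ => ?_
        rw [Finset.sum_mul]
    _ = ∑ K, (1 : Matrix (Idx p q) (Idx p q) ℝ) I K * x K := by
        refine Finset.sum_congr rfl fun K _ => ?_
        rw [← Matrix.mul_apply, htMat_mul_self]
    _ = x I := by
        have h : ∀ K, (1 : Matrix (Idx p q) (Idx p q) ℝ) I K * x K
            = if I = K then x K else 0 := fun K => by
          rw [Matrix.one_apply]; split_ifs <;> simp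
        rw [Finset.sum_congr rfl fun K _ => h K, Finset.sum_ite_eq]
        simp

lemma ht_trace (p q : ℕ) :
    ∑ I : Idx p q, ∑ J : Idx p q, htMat p q I J * htMat p q J I = ((p:ℝ) + q + 2) := by
  have h1 : ∀ I : Idx p q, ∑ J, htMat p q I J * htMat p q J I = 1 := by
    intro I
    have h := congrFun (congrFun (htMat_mul_self p q) I) I
    rw [Matrix.mul_apply] at h
    rw [h, Matrix.one_apply_eq]
  simp only [h1]
  rw [Finset.sum_const, Finset.card_univ, nsmul_eq_mul, mul_one]
  norm_num [Fintype.card_sum]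
  push_cast
  ring

lemma ht_contract (p q : ℕ) (x : Idx p q → ℝ) (I : Idx p q) :
    ∑ J, htMat p q I J * pderiv p q J (QForm p q) x = 2 * x I := by
  calc ∑ J, htMat p q I J * pderiv p q J (QForm p q) x
      = ∑ J, 2 * (htMat p q I J * (∑ K, htMat p q J K * x K)) := by
        refine Finset.sum_congr rfl fun J _ => ?_
        rw [pderiv_QForm]; ring
    _ = 2 * x I := by rw [← Finset.mul_sum, ht_double]

lemma contractA (p q : ℕ) (x : Idx p q → ℝ) :
    ∑ I, ∑ J, htMat p q I J * pderiv p q I (QForm p q) x * pderiv p q J (QForm p q) x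
      = 4 * QForm p q x := by
  have h1 : ∀ I : Idx p q,
      ∑ J, htMat p q I J * pderiv p q I (QForm p q) x * pderiv p q J (QForm p q) x
      = pderiv p q I (QForm p q) x * (2 * x I) := by
    intro I
    rw [← ht_contract p q x I, Finset.mul_sum]
    exact Finset.sum_congr rfl fun J _ => by ring
  simp only [h1]
  have h2 : ∀ I, pderiv p q I (QForm p q) x * (2 * x I)
      = 4 * (x I * ∑ K, htMat p q I K * x K) := by
    intro I; rw [pderiv_QForm]; ring
  simp only [h2]
  rw [← Finset.mul_sum]
  unfold QForm
  congr 1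
  refine Finset.sum_congr rfl fun I _ => ?_
  rw [Finset.mul_sum]
  exact Finset.sum_congr rfl fun J _ => by ring

lemma contractC (p q : ℕ) (x v : Idx p q → ℝ) :
    ∑ I, ∑ J, htMat p q I J * pderiv p q J (QForm p q) x * v I
      = 2 * ∑ I, x I * v I := by
  have h1 : ∀ I : Idx p q, ∑ J, htMat p q I J * pderiv p q J (QForm p q) x * v I
      = (2 * x I) * v I := by
    intro I
    rw [← ht_contract p q x I, Finset.sum_mul]
  simp only [h1]
  rw [Finset.mul_sum]
  exact Finset.sum_congr rfl fun I _ => by ring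

lemma contractC' (p q : ℕ) (x v : Idx p q → ℝ) :
    ∑ I, ∑ J, htMat p q I J * pderiv p q I (QForm p q) x * v J
      = 2 * ∑ I, x I * v I := by
  rw [Finset.sum_comm]
  calc ∑ J, ∑ I, htMat p q I J * pderiv p q I (QForm p q) x * v J
      = ∑ J, ∑ I, htMat p q J I * pderiv p q I (QForm p q) x * v J :=
        Finset.sum_congr rfl fun J _ => Finset.sum_congr rfl fun I _ => by rw [htMat_symm]
    _ = 2 * ∑ I, x I * v I := contractC p q x v

lemma sum2_mul (a : ℝ) (f : Idx p q → Idx p q → ℝ) :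
    ∑ I, ∑ J, a * f I J = a * ∑ I, ∑ J, f I J := by
  rw [Finset.mul_sum]
  exact Finset.sum_congr rfl fun I _ => (Finset.mul_sum _ _ _).symm

end Contract

section Main

theorem statement8' (p q : ℕ) (hn : 3 ≤ p + q)
    (U : Set (Idx p q → ℝ)) (hU : IsOpen U)
    (w : ℝ) (k : ℕ) (hk : 1 ≤ k)
    (hwk : (p + q : ℝ) + 2 * w ≠ 2 * (k : ℝ))
    (ft u : (Idx p q → ℝ) → ℝ)
    (hft : ContDiffOn ℝ (⊤ : ℕ∞) ft U) (hu : ContDiffOn ℝ (⊤ : ℕ∞) u U)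
    (hlap : ∀ x ∈ U, laplt p q ft x = QForm p q x ^ (k - 1) * u x)
    (heu : ∀ x ∈ U, euler p q u x = (w - 2 * (k : ℝ)) * u x) :
    ∀ x ∈ U,
      laplt p q (fun y => ft y +
          QForm p q y ^ k *
            (-(2 * (k : ℝ) * ((p + q : ℝ) + 2 * w - 2 * (k : ℝ))))⁻¹ * u y) x
        = QForm p q x ^ k *
            laplt p q (fun y =>
              (-(2 * (k : ℝ) * ((p + q : ℝ) + 2 * w - 2 * (k : ℝ))))⁻¹ * u y) x := by
  intro x hx
  set c : ℝ := (-(2 * (k : ℝ) * ((p + q : ℝ) + 2 * w - 2 * (k : ℝ))))⁻¹ with hcdef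
  have hUx : U ∈ nhds x := hU.mem_nhds hx
  have huAt : ∀ y ∈ U, ContDiffAt ℝ (⊤ : ℕ∞) u y := fun y hy => hu.contDiffAt (hU.mem_nhds hy)
  have hftAt : ∀ y ∈ U, ContDiffAt ℝ (⊤ : ℕ∞) ft y := fun y hy => hft.contDiffAt (hU.mem_nhds hy)
  have hQdiff : ∀ (y : Idx p q → ℝ) (m : ℕ), DifferentiableAt ℝ (fun z => QForm p q z ^ m) y :=
    fun y m => (((contDiff_QForm p q).pow m).differentiable (by simp)).differentiableAt
  have hQdiff' : ∀ y : Idx p q → ℝ, DifferentiableAt ℝ (QForm p q) y :=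
    fun y => ((contDiff_QForm p q).differentiable (by simp)).differentiableAt
  have hGAt : ∀ y ∈ U, ContDiffAt ℝ (⊤ : ℕ∞) (fun z => QForm p q z ^ k * c * u z) y := fun y hy =>
    ((((contDiff_QForm p q).pow k).contDiffAt.mul contDiffAt_const).mul (huAt y hy))
  have hudx : DifferentiableAt ℝ u x := (huAt x hx).differentiableAt (by simp)
  have hDU : ∀ J : Idx p q, DifferentiableAt ℝ (pderiv p q J u) x :=
    fun J => (contDiffAt_pderiv (huAt x hx) J).differentiableAt (by simp)
  have hcast : ((k - 1 : ℕ) : ℝ) = (k : ℝ) - 1 := by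
    rw [Nat.cast_sub hk]; norm_num
  -- first derivative of the correction term, eventually near x
  have hGd : ∀ J : Idx p q, pderiv p q J (fun z => QForm p q z ^ k * c * u z)
      =ᶠ[nhds x] fun y => (k:ℝ) * QForm p q y ^ (k-1) * pderiv p q J (QForm p q) y * (c * u y)
        + QForm p q y ^ k * (c * pderiv p q J u y) := by
    intro J
    filter_upwards [hUx] with y hy
    have h1 : DifferentiableAt ℝ (fun z => QForm p q z ^ k * c) y :=
      (hQdiff y k).mul_const c
    have h2 : DifferentiableAt ℝ u y := (huAt y hy).differentiableAt (by simp)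
    have e1 : pderiv p q J (fun z => QForm p q z ^ k * c * u z) y
        = (QForm p q y ^ k * c) * pderiv p q J u y
          + u y * pderiv p q J (fun z => QForm p q z ^ k * c) y :=
      pderiv_fun_mul h1 h2
    have e2 : pderiv p q J (fun z => QForm p q z ^ k * c) y
        = c * pderiv p q J (fun z => QForm p q z ^ k) y :=
      pderiv_mul_const (hQdiff y k) c
    have e3 : pderiv p q J (fun z => QForm p q z ^ k) y
        = (k:ℝ) * QForm p q y ^ (k-1) * pderiv p q J (QForm p q) y := by
      have := pderiv_fun_pow (f := QForm p q) (x := y) (I := J) (hQdiff' y) k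
      exact this
    rw [e1, e2, e3]; ring
  -- second derivatives of the correction term at x
  have hGdd : ∀ I J : Idx p q,
      pderiv p q I (pderiv p q J (fun z => QForm p q z ^ k * c * u z)) x
      = (k:ℝ) * ((k:ℝ)-1) * QForm p q x ^ (k-1-1) * (c * u x)
          * (pderiv p q I (QForm p q) x * pderiv p q J (QForm p q) x)
        + 2 * (k:ℝ) * QForm p q x ^ (k-1) * (c * u x) * htMat p q J I
        + (k:ℝ) * QForm p q x ^ (k-1) * c
          * (pderiv p q I u x * pderiv p q J (QForm p q) x)
        + (k:ℝ) * QForm p q x ^ (k-1) * c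
          * (pderiv p q J u x * pderiv p q I (QForm p q) x)
        + QForm p q x ^ k * pderiv p q I (fun y => c * pderiv p q J u y) x := by
    intro I J
    have d1 : DifferentiableAt ℝ (fun y => (k:ℝ) * QForm p q y ^ (k-1)) x :=
      (hQdiff x (k-1)).const_mul _
    have d2 : DifferentiableAt ℝ (pderiv p q J (QForm p q)) x :=
      ((contDiff_pderiv_QForm p q J).differentiable (by simp)).differentiableAt
    have hA1 : DifferentiableAt ℝ
        (fun y => (k:ℝ) * QForm p q y ^ (k-1) * pderiv p q J (QForm p q) y) x := d1.mul d2
    have hA2 : DifferentiableAt ℝ (fun y => c * u y) x := hudx.const_mul c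
    have hB2 : DifferentiableAt ℝ (fun y => c * pderiv p q J u y) x := (hDU J).const_mul c
    have hfd : pderiv p q I (pderiv p q J (fun z => QForm p q z ^ k * c * u z)) x
        = pderiv p q I (fun y =>
            (k:ℝ) * QForm p q y ^ (k-1) * pderiv p q J (QForm p q) y * (c * u y)
            + QForm p q y ^ k * (c * pderiv p q J u y)) x :=
      congrArg (fun L : (Idx p q → ℝ) →L[ℝ] ℝ => L (Pi.single I 1)) (hGd J).fderiv_eq
    rw [hfd]
    have eadd : pderiv p q I (fun y =>
          (k:ℝ) * QForm p q y ^ (k-1) * pderiv p q J (QForm p q) y * (c * u y)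
          + QForm p q y ^ k * (c * pderiv p q J u y)) x
        = pderiv p q I (fun y =>
            (k:ℝ) * QForm p q y ^ (k-1) * pderiv p q J (QForm p q) y * (c * u y)) x
          + pderiv p q I (fun y => QForm p q y ^ k * (c * pderiv p q J u y)) x :=
      pderiv_fun_add (hA1.mul hA2) ((hQdiff x k).mul hB2)
    have eA : pderiv p q I (fun y =>
          (k:ℝ) * QForm p q y ^ (k-1) * pderiv p q J (QForm p q) y * (c * u y)) x
        = ((k:ℝ) * QForm p q x ^ (k-1) * pderiv p q J (QForm p q) x)
            * pderiv p q I (fun y => c * u y) x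
          + (c * u x) * pderiv p q I (fun y =>
              (k:ℝ) * QForm p q y ^ (k-1) * pderiv p q J (QForm p q) y) x :=
      pderiv_fun_mul hA1 hA2
    have eA2 : pderiv p q I (fun y => c * u y) x = c * pderiv p q I u x :=
      pderiv_const_mul hudx c
    have eA3 : pderiv p q I (fun y =>
          (k:ℝ) * QForm p q y ^ (k-1) * pderiv p q J (QForm p q) y) x
        = ((k:ℝ) * QForm p q x ^ (k-1)) * pderiv p q I (pderiv p q J (QForm p q)) x
          + pderiv p q J (QForm p q) x
            * pderiv p q I (fun y => (k:ℝ) * QForm p q y ^ (k-1)) x :=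
      pderiv_fun_mul d1 d2
    have eA4 : pderiv p q I (pderiv p q J (QForm p q)) x = 2 * htMat p q J I :=
      pderiv_pderiv_QForm p q J I x
    have eA5 : pderiv p q I (fun y => (k:ℝ) * QForm p q y ^ (k-1)) x
        = (k:ℝ) * pderiv p q I (fun y => QForm p q y ^ (k-1)) x :=
      pderiv_const_mul (hQdiff x (k-1)) _
    have eA6 : pderiv p q I (fun y => QForm p q y ^ (k-1)) x
        = ((k-1 : ℕ) : ℝ) * QForm p q x ^ (k-1-1) * pderiv p q I (QForm p q) x :=
      pderiv_fun_pow (hQdiff' x) (k-1)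
    have eB : pderiv p q I (fun y => QForm p q y ^ k * (c * pderiv p q J u y)) x
        = QForm p q x ^ k * pderiv p q I (fun y => c * pderiv p q J u y) x
          + (c * pderiv p q J u x) * pderiv p q I (fun y => QForm p q y ^ k) x :=
      pderiv_fun_mul (hQdiff x k) hB2
    have eB2 : pderiv p q I (fun y => QForm p q y ^ k) x
        = (k:ℝ) * QForm p q x ^ (k-1) * pderiv p q I (QForm p q) x :=
      pderiv_fun_pow (hQdiff' x) k
    rw [eadd, eA, eA2, eA3, eA4, eA5, eA6, eB, eB2, hcast]
    ring
  -- second derivatives of η at x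
  have hηdd : ∀ I J : Idx p q, pderiv p q I (pderiv p q J (fun y => c * u y)) x
      = pderiv p q I (fun y => c * pderiv p q J u y) x := by
    intro I J
    have hev : pderiv p q J (fun y => c * u y) =ᶠ[nhds x] fun y => c * pderiv p q J u y := by
      filter_upwards [hUx] with y hy
      exact pderiv_const_mul ((huAt y hy).differentiableAt (by simp)) c
    exact congrArg (fun L : (Idx p q → ℝ) →L[ℝ] ℝ => L (Pi.single I 1)) hev.fderiv_eq
  -- split the Laplacian of the sum
  have hsplit : ∀ I J : Idx p q,
      pderiv p q I (pderiv p q J (fun y => ft y + QForm p q y ^ k * c * u y)) x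
      = pderiv p q I (pderiv p q J ft) x
        + pderiv p q I (pderiv p q J (fun z => QForm p q z ^ k * c * u z)) x := by
    intro I J
    have hev : pderiv p q J (fun y => ft y + QForm p q y ^ k * c * u y)
        =ᶠ[nhds x] fun y => pderiv p q J ft y
          + pderiv p q J (fun z => QForm p q z ^ k * c * u z) y := by
      filter_upwards [hUx] with y hy
      exact pderiv_fun_add ((hftAt y hy).differentiableAt (by simp))
        ((hGAt y hy).differentiableAt (by simp))
    have h1 : pderiv p q I (pderiv p q J (fun y => ft y + QForm p q y ^ k * c * u y)) x
        = pderiv p q I (fun y => pderiv p q J ft y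
            + pderiv p q J (fun z => QForm p q z ^ k * c * u z) y) x :=
      congrArg (fun L : (Idx p q → ℝ) →L[ℝ] ℝ => L (Pi.single I 1)) hev.fderiv_eq
    rw [h1]
    exact pderiv_fun_add ((contDiffAt_pderiv (hftAt x hx) J).differentiableAt (by simp))
      ((contDiffAt_pderiv (hGAt x hx) J).differentiableAt (by simp))
  -- term-by-term rewriting of the summand
  have step1 : ∀ I J : Idx p q,
      htMat p q I J * pderiv p q I (pderiv p q J
        (fun y => ft y + QForm p q y ^ k * c * u y)) x
      = htMat p q I J * pderiv p q I (pderiv p q J ft) x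
        + ((k:ℝ) * ((k:ℝ)-1) * QForm p q x ^ (k-1-1) * (c * u x)
            * (htMat p q I J * pderiv p q I (QForm p q) x * pderiv p q J (QForm p q) x)
          + 2 * (k:ℝ) * QForm p q x ^ (k-1) * (c * u x) * (htMat p q I J * htMat p q J I)
          + (k:ℝ) * QForm p q x ^ (k-1) * c
            * (htMat p q I J * pderiv p q J (QForm p q) x * pderiv p q I u x)
          + (k:ℝ) * QForm p q x ^ (k-1) * c
            * (htMat p q I J * pderiv p q I (QForm p q) x * pderiv p q J u x)
          + QForm p q x ^ k
            * (htMat p q I J * pderiv p q I (pderiv p q J (fun y => c * u y)) x)) := by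
    intro I J
    rw [hsplit I J, hGdd I J, hηdd I J]
    ring
  -- assemble the sums
  have hcK : c * (2 * (k:ℝ) * ((p + q : ℝ) + 2 * w - 2 * (k:ℝ))) = -1 := by
    have hK : (2 * (k:ℝ) * ((p + q : ℝ) + 2 * w - 2 * (k:ℝ))) ≠ 0 := by
      apply mul_ne_zero
      · positivity
      · intro h; apply hwk; linarith
    rw [hcdef, inv_neg, neg_mul, inv_mul_cancel₀ hK]
  have hpow : (k:ℝ) * ((k:ℝ)-1) * (QForm p q x ^ (k-1-1) * QForm p q x)
      = (k:ℝ) * ((k:ℝ)-1) * QForm p q x ^ (k-1) := by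
    rcases Nat.lt_or_ge k 2 with h | h
    · have hk1 : k = 1 := by omega
      subst hk1; norm_num
    · have h2 : k - 1 - 1 + 1 = k - 1 := by omega
      rw [← pow_succ, h2]
  calc laplt p q (fun y => ft y + QForm p q y ^ k * c * u y) x
      = ∑ I : Idx p q, ∑ J : Idx p q, htMat p q I J * pderiv p q I (pderiv p q J
          (fun y => ft y + QForm p q y ^ k * c * u y)) x := by
        simp only [laplt, htMat_inv]
    _ = ∑ I : Idx p q, ∑ J : Idx p q,
          (htMat p q I J * pderiv p q I (pderiv p q J ft) x
          + ((k:ℝ) * ((k:ℝ)-1) * QForm p q x ^ (k-1-1) * (c * u x)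
              * (htMat p q I J * pderiv p q I (QForm p q) x * pderiv p q J (QForm p q) x)
            + 2 * (k:ℝ) * QForm p q x ^ (k-1) * (c * u x) * (htMat p q I J * htMat p q J I)
            + (k:ℝ) * QForm p q x ^ (k-1) * c
              * (htMat p q I J * pderiv p q J (QForm p q) x * pderiv p q I u x)
            + (k:ℝ) * QForm p q x ^ (k-1) * c
              * (htMat p q I J * pderiv p q I (QForm p q) x * pderiv p q J u x)
            + QForm p q x ^ k
              * (htMat p q I J * pderiv p q I (pderiv p q J (fun y => c * u y)) x))) :=
        Finset.sum_congr rfl fun I _ => Finset.sum_congr rfl fun J _ => step1 I J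
    _ = (∑ I : Idx p q, ∑ J : Idx p q, htMat p q I J * pderiv p q I (pderiv p q J ft) x)
        + (((k:ℝ) * ((k:ℝ)-1) * QForm p q x ^ (k-1-1) * (c * u x)) * (4 * QForm p q x)
          + (2 * (k:ℝ) * QForm p q x ^ (k-1) * (c * u x)) * ((p:ℝ) + q + 2)
          + ((k:ℝ) * QForm p q x ^ (k-1) * c) * (2 * ∑ I : Idx p q, x I * pderiv p q I u x)
          + ((k:ℝ) * QForm p q x ^ (k-1) * c) * (2 * ∑ I : Idx p q, x I * pderiv p q I u x)
          + QForm p q x ^ k * (∑ I : Idx p q, ∑ J : Idx p q,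
              htMat p q I J * pderiv p q I (pderiv p q J (fun y => c * u y)) x)) := by
        simp only [Finset.sum_add_distrib]
        rw [sum2_mul, sum2_mul, sum2_mul, sum2_mul, sum2_mul,
          contractA, ht_trace, contractC p q x (fun I => pderiv p q I u x),
          contractC' p q x (fun J => pderiv p q J u x)]
    _ = QForm p q x ^ k * laplt p q (fun y => c * u y) x := by
        have hft' : (∑ I : Idx p q, ∑ J : Idx p q,
            htMat p q I J * pderiv p q I (pderiv p q J ft) x)
            = QForm p q x ^ (k-1) * u x := by
          rw [← hlap x hx]
          simp only [laplt, htMat_inv]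
        have heu' : (∑ I : Idx p q, x I * pderiv p q I u x) = (w - 2 * (k:ℝ)) * u x := by
          rw [← heu x hx]; rfl
        have hlapη : laplt p q (fun y => c * u y) x
            = ∑ I : Idx p q, ∑ J : Idx p q,
                htMat p q I J * pderiv p q I (pderiv p q J (fun y => c * u y)) x := by
          simp only [laplt, htMat_inv]
        rw [hft', heu', hlapη]
        linear_combination (4 * (c * u x)) * hpow
          + (QForm p q x ^ (k-1) * u x) * hcK

end Main

/-- If `Δ̃f̃ = Q^{k-1} u` with `u` homogeneous of degree `w - 2k` and
`n + 2w ≠ 2k`, then with `η = -(2k(n+2w-2k))⁻¹ u` one has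
`Δ̃(f̃ + Q^k η) = Q^k Δ̃η`: the correction improves the order of vanishing of the
Laplacian along `{Q = 0}` from `Q^{k-1}` to `Q^k`. -/
theorem statement8 (p q : ℕ) (hn : 3 ≤ p + q)
    (U : Set (Idx p q → ℝ)) (hU : IsOpen U)
    (w : ℝ) (k : ℕ) (hk : 1 ≤ k)
    (hwk : (p + q : ℝ) + 2 * w ≠ 2 * (k : ℝ))
    (ft u : (Idx p q → ℝ) → ℝ)
    (hft : ContDiffOn ℝ (⊤ : ℕ∞) ft U) (hu : ContDiffOn ℝ (⊤ : ℕ∞) u U)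
    (hlap : ∀ x ∈ U, laplt p q ft x = QForm p q x ^ (k - 1) * u x)
    (heu : ∀ x ∈ U, euler p q u x = (w - 2 * (k : ℝ)) * u x) :
    ∀ x ∈ U,
      laplt p q (fun y => ft y +
          QForm p q y ^ k *
            (-(2 * (k : ℝ) * ((p + q : ℝ) + 2 * w - 2 * (k : ℝ))))⁻¹ * u y) x
        = QForm p q x ^ k *
            laplt p q (fun y =>
              (-(2 * (k : ℝ) * ((p + q : ℝ) + 2 * w - 2 * (k : ℝ))))⁻¹ * u y) x :=
  statement8' p q hn U hU w k hk hwk ft u hft hu hlap heu
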